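/- arXiv:1210.2552 — 3 statements merged into one kernel-verified Lean document; each statement's English description precedes it below -/
import Mathlib

section
/- Suppose v = v₁·v₂ and u is a word all of whose letters are left-absorbed by v, but v₁ does not bite u from the right (v₁ left-absorbs no letter of the final segment of u). Then every letter of u commutes with every letter of v₁, and u is left-absorbed by v₂. -/
structure Letter (N : ℕ) where
  lo : ℕ
  hi : ℕ
  lo_le_hi : lo ≤ hi
  hi_le : hi ≤ N

namespace PS

/-- `t` is a (non-strict) subletter of `s`. -/
def Sub {N : ℕ} (t s : Letter N) : Prop := s.lo ≤ t.lo ∧ t.hi ≤ s.hi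

/-- `t` is a proper subletter of `s`. -/
def PSub {N : ℕ} (t s : Letter N) : Prop := Sub t s ∧ t ≠ s

/-- Two letters commute iff they have distance at least 2. -/
def Comm {N : ℕ} (s t : Letter N) : Prop := s.hi + 2 ≤ t.lo ∨ t.hi + 2 ≤ s.lo

abbrev Word (N : ℕ) := List (Letter N)

/-- Commutation step: swap two adjacent commuting letters. -/
def SwapStep {N : ℕ} (u v : Word N) : Prop :=
  ∃ (x y : Word N) (s t : Letter N),
    Comm s t ∧ u = x ++ s :: t :: y ∧ v = x ++ t :: s :: y

/-- Cancellation step: replace an occurrence `s·t` or `t·s` by `s`, when `t ⊆ s`. -/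
def CancelStep {N : ℕ} (u v : Word N) : Prop :=
  ∃ (x y : Word N) (s t : Letter N),
    Sub t s ∧ (u = x ++ s :: t :: y ∨ u = x ++ t :: s :: y) ∧ v = x ++ s :: y

/-- Splitting step: replace an occurrence `s·s` by a (possibly empty) product of
proper subletters of `s`. -/
def SplitStep {N : ℕ} (u v : Word N) : Prop :=
  ∃ (x y : Word N) (s : Letter N) (l : Word N),
    (∀ t ∈ l, PSub t s) ∧ u = x ++ s :: s :: y ∧ v = x ++ l ++ y

/-- Commutation-equivalence of words. -/
def WEquiv {N : ℕ} : Word N → Word N → Prop := Relation.ReflTransGen SwapStep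

/-- Reduction: finitely many commutation and cancellation steps. -/
def Red {N : ℕ} : Word N → Word N → Prop :=
  Relation.ReflTransGen (fun u v => SwapStep u v ∨ CancelStep u v)

/-- Strong reduction: also allowing splitting steps. -/
def SRed {N : ℕ} : Word N → Word N → Prop :=
  Relation.ReflTransGen (fun u v => SwapStep u v ∨ CancelStep u v ∨ SplitStep u v)

/-- The congruence defining the monoid Γ. -/
def GammaRel {N : ℕ} : Word N → Word N → Prop :=
  Relation.EqvGen (fun u v => SwapStep u v ∨ CancelStep u v)

/-- A word is reduced if there is no pair of occurrences `i ≠ j` with `sᵢ ⊆ sⱼ`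
such that `sᵢ` commutes with every letter strictly between them. -/
def Reduced {N : ℕ} (w : Word N) : Prop :=
  ¬ ∃ (x y z : Word N) (a b : Letter N),
      w = x ++ a :: (y ++ b :: z) ∧
      ((Sub a b ∧ ∀ r ∈ y, Comm a r) ∨ (Sub b a ∧ ∀ r ∈ y, Comm b r))

/-- The letter `s` is left-absorbed by the word `v`. -/
def LAbsLetter {N : ℕ} (s : Letter N) (v : Word N) : Prop :=
  ∃ (x : Word N) (t : Letter N) (y : Word N),
    v = x ++ t :: y ∧ Sub s t ∧ ∀ r ∈ x, Comm s r

/-- The letter `s` is properly left-absorbed by the word `v`. -/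
def PLAbsLetter {N : ℕ} (s : Letter N) (v : Word N) : Prop :=
  ∃ (x : Word N) (t : Letter N) (y : Word N),
    v = x ++ t :: y ∧ PSub s t ∧ ∀ r ∈ x, Comm s r

/-- The letter `s` is right-absorbed by the word `w`. -/
def RAbsLetter {N : ℕ} (s : Letter N) (w : Word N) : Prop :=
  ∃ (x : Word N) (t : Letter N) (y : Word N),
    w = x ++ t :: y ∧ Sub s t ∧ ∀ r ∈ y, Comm s r

/-- The letter `s` is properly right-absorbed by the word `w`. -/
def PRAbsLetter {N : ℕ} (s : Letter N) (w : Word N) : Prop :=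
  ∃ (x : Word N) (t : Letter N) (y : Word N),
    w = x ++ t :: y ∧ PSub s t ∧ ∀ r ∈ y, Comm s r

/-- The word `u` is left-absorbed by `v`. -/
def LAbsWord {N : ℕ} (u v : Word N) : Prop := ∀ s ∈ u, LAbsLetter s v

/-- `v` bites `u` from the right: `v` left-absorbs some letter of the final segment of `u`. -/
def BitesRight {N : ℕ} (v u : Word N) : Prop :=
  ∃ (x : Word N) (s : Letter N) (y : Word N),
    u = x ++ s :: y ∧ (∀ r ∈ y, Comm s r) ∧ LAbsLetter s v

end PS

/-!
Induct on `u` from the right. The last letter `s` of `u` lies in the final segment, so it is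
not left-absorbed by `v₁`; hence the letter absorbing it lies in `v₂` and `s` commutes with all
of `v₁`. Any letter absorbed by `v₁` sits inside a letter of `v₁`, so it commutes with `s` too:
a bite of `v₁` into `u` without `s` would survive appending `s`.
-/

namespace PS

variable {N : ℕ}

theorem Comm.of_sub_left {a t b : Letter N} (hsub : Sub a t) (hc : Comm t b) : Comm a b := by
  obtain ⟨h₁, h₂⟩ := hsub
  unfold Comm at hc ⊢
  omega

theorem Comm.symm {a b : Letter N} (h : Comm a b) : Comm b a := Or.symm h

theorem LAbsLetter.of_append {s : Letter N} {v₁ v₂ : Word N} (h : LAbsLetter s (v₁ ++ v₂)) :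
    LAbsLetter s v₁ ∨ (∀ r ∈ v₁, Comm s r) ∧ LAbsLetter s v₂ := by
  obtain ⟨x, t, y, hv, hsub, hcomm⟩ := h
  rcases List.append_eq_append_iff.mp hv with ⟨a, rfl, rfl⟩ | ⟨c, rfl, hty⟩
  · exact .inr ⟨fun r hr => hcomm r (by simp [hr]),
      a, t, y, rfl, hsub, fun r hr => hcomm r (by simp [hr])⟩
  · cases c with
    | nil =>
      rw [List.nil_append] at hty
      subst hty
      exact .inr ⟨fun r hr => hcomm r (by simpa using hr), [], t, y, rfl, hsub, by simp⟩
    | cons t' c =>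
      obtain ⟨rfl, -⟩ := List.cons_eq_cons.mp hty
      exact .inl ⟨x, t, c, rfl, hsub, hcomm⟩

theorem bitesRight_append_singleton {s : Letter N} {u v : Word N} (h : LAbsLetter s v) :
    BitesRight v (u ++ [s]) :=
  ⟨u, s, [], rfl, by simp, h⟩

theorem BitesRight.append_singleton_of_comm {s : Letter N} {u v : Word N}
    (hb : BitesRight v u) (hs : ∀ r ∈ v, Comm s r) : BitesRight v (u ++ [s]) := by
  obtain ⟨x, s', y, rfl, hy, x', t, y', rfl, hsub, hx'⟩ := hb
  have hs' : Comm s' s := (hs t (by simp)).symm.of_sub_left hsub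
  refine ⟨x, s', y ++ [s], by simp, ?_, x', t, y', rfl, hsub, hx'⟩
  simpa only [List.forall_mem_append, List.forall_mem_singleton] using ⟨hy, hs'⟩

end PS

open PS in
/-- If `u` is left-absorbed by `v = v₁ · v₂` but `v₁` does not bite `u` from the
right, then `u` commutes with `v₁` and is left-absorbed by `v₂`. -/
theorem labs_not_bitten {N : ℕ} (u v₁ v₂ : Word N)
    (habs : LAbsWord u (v₁ ++ v₂)) (hnb : ¬ BitesRight v₁ u) :
    (∀ a ∈ u, ∀ b ∈ v₁, Comm a b) ∧ LAbsWord u v₂ := by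
  induction u using List.reverseRecOn with
  | nil => simp [LAbsWord]
  | append_singleton u s ih =>
    have hs : (∀ r ∈ v₁, Comm s r) ∧ LAbsLetter s v₂ :=
      (habs s (by simp)).of_append.resolve_left fun h => hnb (bitesRight_append_singleton h)
    obtain ⟨hu₁, hu₂⟩ := ih (fun a ha => habs a (by simp [ha]))
      fun hb => hnb (hb.append_singleton_of_comm hs.1)
    simp only [LAbsWord, List.forall_mem_append, List.forall_mem_singleton] at hu₂ ⊢
    exact ⟨⟨hu₁, hs.1⟩, ⟨hu₂, hs.2⟩⟩
end

section
/- The relation ≺ on words over interval letters, where u ≺ v if some commutation-permutation of u is obtained from v by replacing at least one letter s of v by a (possibly empty) product of proper subletters of s, is transitive and well-founded. -/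
namespace PS

/-- `Repl v u b`: `u` is obtained from `v` by keeping some letters and replacing
others by (possibly empty) products of proper subletters; `b = true` iff at least
one replacement occurred. -/
inductive Repl {N : ℕ} : Word N → Word N → Bool → Prop
  | nil : Repl [] [] false
  | keep {v u : Word N} {b : Bool} (s : Letter N) :
      Repl v u b → Repl (s :: v) (s :: u) b
  | split {v u : Word N} {b : Bool} (s : Letter N) (l : Word N)
      (hl : ∀ t ∈ l, PSub t s) :
      Repl v u b → Repl (s :: v) (l ++ u) true

/-- `u ≺ v`: some commutation-permutation of `u` is obtained from `v` by replacing
at least one letter of `v` by a product of proper subletters. -/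
def Prec {N : ℕ} (u v : Word N) : Prop :=
  ∃ u' : Word N, WEquiv u u' ∧ Repl v u' true

/-- `u ⪯ v`. -/
def Preceq {N : ℕ} (u v : Word N) : Prop := Prec u v ∨ WEquiv u v

end PS

/-!
Transitivity: a replacement performed on a word survives a swap of two commuting letters, because
subletters of commuting letters still commute, so the replaced images can be swapped as blocks; and
two successive replacements compose into one, since a proper subletter of a subletter of `s` is a
proper subletter of `s`.

Well-foundedness: a replacement trades a letter for finitely many strictly shorter ones, so the
multiset of letter sizes drops in the Dershowitz–Manna order, which is well founded on `ℕ`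
(it is the order of the ordinal rank `Σ ω^i · #{letters with i+1 elements}`).
-/

def Letter.size {N : ℕ} (s : Letter N) : ℕ := s.hi - s.lo

namespace PS

variable {N : ℕ}

theorem Sub.refl (s : Letter N) : Sub s s := ⟨le_rfl, le_rfl⟩

theorem Sub.trans {a b c : Letter N} (hab : Sub a b) (hbc : Sub b c) : Sub a c :=
  ⟨hbc.1.trans hab.1, hab.2.trans hbc.2⟩

theorem Sub.antisymm {a b : Letter N} (hab : Sub a b) (hba : Sub b a) : a = b := by
  obtain ⟨lo, hi, _, _⟩ := a
  obtain ⟨lo', hi', _, _⟩ := b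
  simp only [Sub, Letter.mk.injEq] at *
  omega

theorem PSub.of_sub {a b c : Letter N} (hab : Sub a b) (hbc : PSub b c) : PSub a c :=
  ⟨hab.trans hbc.1, fun hac => hbc.2 (hbc.1.antisymm (hac ▸ hab))⟩

theorem PSub.size_lt {t s : Letter N} (h : PSub t s) : t.size < s.size := by
  obtain ⟨⟨h₁, h₂⟩, hne⟩ := h
  have := t.lo_le_hi
  by_contra hle
  simp only [Letter.size, not_lt] at hle
  exact hne (Sub.antisymm ⟨h₁, h₂⟩ ⟨by omega, by omega⟩)

theorem Comm.mono {s t s' t' : Letter N} (h : Comm s t) (hs : Sub s' s) (ht : Sub t' t) :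
    Comm s' t' := by
  obtain ⟨hs₁, hs₂⟩ := hs
  obtain ⟨ht₁, ht₂⟩ := ht
  unfold Comm at h ⊢
  omega

theorem SwapStep.append {u v : Word N} (h : SwapStep u v) (x y : Word N) :
    SwapStep (x ++ u ++ y) (x ++ v ++ y) := by
  obtain ⟨x', y', s, t, hc, rfl, rfl⟩ := h
  exact ⟨x ++ x', y' ++ y, s, t, hc, by simp, by simp⟩

theorem WEquiv.refl (u : Word N) : WEquiv u u := Relation.ReflTransGen.refl

theorem WEquiv.trans {u v w : Word N} (huv : WEquiv u v) (hvw : WEquiv v w) : WEquiv u w :=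
  Relation.ReflTransGen.trans huv hvw

theorem WEquiv.append {u v : Word N} (h : WEquiv u v) (x y : Word N) :
    WEquiv (x ++ u ++ y) (x ++ v ++ y) :=
  Relation.ReflTransGen.lift (fun w => x ++ w ++ y) (fun _ _ hs => SwapStep.append hs x y) _ _ h

theorem WEquiv.perm {u v : Word N} (h : WEquiv u v) : u.Perm v := by
  induction h with
  | refl => rfl
  | tail _ hs ih =>
    obtain ⟨x, y, s, t, -, rfl, rfl⟩ := hs
    exact ih.trans ((List.Perm.swap t s y).append_left x)

theorem wequiv_cons_append_comm {s : Letter N} :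
    ∀ {l : Word N}, (∀ r ∈ l, Comm s r) → WEquiv (s :: l) (l ++ [s])
  | [], _ => WEquiv.refl _
  | r :: l, h => by
    have hswap : SwapStep (s :: r :: l) (r :: s :: l) := ⟨[], l, s, r, h r (by simp), rfl, rfl⟩
    have ih := (wequiv_cons_append_comm (l := l) fun r' hr' => h r' (by simp [hr'])).append [r] []
    simp only [List.singleton_append, List.append_nil] at ih
    exact Relation.ReflTransGen.head hswap ih

theorem wequiv_append_comm :
    ∀ {l₁ l₂ : Word N}, (∀ a ∈ l₁, ∀ b ∈ l₂, Comm a b) → WEquiv (l₁ ++ l₂) (l₂ ++ l₁)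
  | [], l₂, _ => by simpa using WEquiv.refl l₂
  | a :: l₁, l₂, h => by
    have ih := (wequiv_append_comm (l₁ := l₁) fun a' ha' => h a' (by simp [ha'])).append [a] []
    have hmove := (wequiv_cons_append_comm (h a (by simp))).append [] l₁
    simp only [List.singleton_append, List.append_nil, List.nil_append] at ih hmove
    simpa using ih.trans hmove

namespace Repl

theorem append {v₁ u₁ v₂ u₂ : Word N} {b₁ b₂ : Bool}
    (h₁ : Repl v₁ u₁ b₁) (h₂ : Repl v₂ u₂ b₂) : Repl (v₁ ++ v₂) (u₁ ++ u₂) (b₁ || b₂) := by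
  induction h₁ with
  | nil => simpa using h₂
  | keep s _ ih => exact keep s ih
  | split s l hl _ ih => simpa using split s l hl ih

theorem exists_of_append :
    ∀ {v₁ v₂ u : Word N} {b : Bool}, Repl (v₁ ++ v₂) u b →
      ∃ u₁ u₂ b₁ b₂, u = u₁ ++ u₂ ∧ b = (b₁ || b₂) ∧ Repl v₁ u₁ b₁ ∧ Repl v₂ u₂ b₂
  | [], _, u, b, h => ⟨[], u, false, b, rfl, rfl, nil, h⟩
  | s :: _, _, _, _, keep _ h => by
    obtain ⟨u₁, u₂, b₁, b₂, rfl, rfl, h₁, h₂⟩ := exists_of_append h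
    exact ⟨s :: u₁, u₂, b₁, b₂, rfl, rfl, keep s h₁, h₂⟩
  | s :: _, _, _, _, split _ l hl h => by
    obtain ⟨u₁, u₂, b₁, b₂, rfl, rfl, h₁, h₂⟩ := exists_of_append h
    exact ⟨l ++ u₁, u₂, true, b₂, by simp, rfl, split s l hl h₁, h₂⟩

theorem exists_sub_of_mem {v u : Word N} {b : Bool} (h : Repl v u b) {t : Letter N}
    (ht : t ∈ u) : ∃ t' ∈ v, Sub t t' := by
  induction h with
  | nil => simp at ht
  | keep s _ ih =>
    rcases List.mem_cons.1 ht with rfl | ht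
    · exact ⟨t, by simp, Sub.refl t⟩
    · obtain ⟨t', ht', hs⟩ := ih ht
      exact ⟨t', by simp [ht'], hs⟩
  | split s l hl _ ih =>
    rcases List.mem_append.1 ht with ht | ht
    · exact ⟨s, by simp, (hl t ht).1⟩
    · obtain ⟨t', ht', hs⟩ := ih ht
      exact ⟨t', by simp [ht'], hs⟩

theorem trans {v u : Word N} {b₁ : Bool} (h₁ : Repl v u b₁) :
    ∀ {w : Word N} {b₂ : Bool}, Repl u w b₂ → Repl v w (b₁ || b₂) := by
  induction h₁ with
  | nil =>
    rintro w b₂ ⟨⟩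
    exact nil
  | keep s _ ih =>
    rintro w b₂ (_ | ⟨_, h₂⟩ | ⟨_, l, hl, h₂⟩)
    · exact keep s (ih h₂)
    · simpa using split s l hl (ih h₂)
  | split s l hl _ ih =>
    intro w b₂ h₂
    obtain ⟨w₁, w₂, b, b', rfl, rfl, hw₁, hw₂⟩ := exists_of_append h₂
    have hl' : ∀ t ∈ w₁, PSub t s := fun t ht =>
      let ⟨_, ht', hsub⟩ := hw₁.exists_sub_of_mem ht
      PSub.of_sub hsub (hl _ ht')
    exact split s w₁ hl' (ih hw₂)

theorem exists_of_swapStep {v v' u : Word N} {b : Bool} (hvv' : SwapStep v v') (h : Repl v u b) :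
    ∃ u', WEquiv u u' ∧ Repl v' u' b := by
  obtain ⟨x, y, s, t, hc, rfl, rfl⟩ := hvv'
  obtain ⟨ux, u₁, bx, b₁, rfl, rfl, hx, h₁⟩ := exists_of_append (v₁ := x) h
  obtain ⟨us, u₂, bs, b₂, rfl, rfl, hs, h₂⟩ := exists_of_append (v₁ := [s]) h₁
  obtain ⟨ut, uy, bt, by_, rfl, rfl, ht, hy⟩ := exists_of_append (v₁ := [t]) h₂
  have hcomm : ∀ a ∈ us, ∀ b ∈ ut, Comm a b := fun a ha b hb => by
    obtain ⟨_, hs', has⟩ := hs.exists_sub_of_mem ha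
    obtain ⟨_, ht', hbt⟩ := ht.exists_sub_of_mem hb
    simp only [List.mem_singleton] at hs' ht'
    subst hs' ht'
    exact hc.mono has hbt
  refine ⟨ux ++ (ut ++ (us ++ uy)), ?_, ?_⟩
  · simpa using (wequiv_append_comm hcomm).append ux uy
  · rw [Bool.or_left_comm bs]
    exact hx.append (ht.append (hs.append hy))

theorem exists_of_wequiv {v v' u : Word N} {b : Bool} (h : Repl v u b) (he : WEquiv v v') :
    ∃ u', WEquiv u u' ∧ Repl v' u' b := by
  induction he with
  | refl => exact ⟨u, WEquiv.refl u, h⟩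
  | tail _ hs ih =>
    obtain ⟨u₁, he₁, h₁⟩ := ih
    obtain ⟨u₂, he₂, h₂⟩ := exists_of_swapStep hs h₁
    exact ⟨u₂, he₁.trans he₂, h₂⟩

end Repl

theorem Prec.trans {u v w : Word N} (huv : Prec u v) (hvw : Prec v w) : Prec u w := by
  obtain ⟨u', heu, hru⟩ := huv
  obtain ⟨v', hev, hrv⟩ := hvw
  obtain ⟨u'', heu', hru'⟩ := hru.exists_of_wequiv hev
  exact ⟨u'', heu.trans heu', by simpa using hrv.trans hru'⟩

def Word.rank (w : Word N) : Multiset ℕ := ↑(w.map Letter.size)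

theorem Word.rank_cons (s : Letter N) (w : Word N) :
    Word.rank (s :: w) = s.size ::ₘ Word.rank w :=
  rfl

theorem Word.rank_append (u v : Word N) : Word.rank (u ++ v) = Word.rank u + Word.rank v := by
  simp [Word.rank]

theorem WEquiv.rank_eq {u v : Word N} (h : WEquiv u v) : Word.rank u = Word.rank v :=
  Multiset.coe_eq_coe.2 (h.perm.map Letter.size)

theorem Repl.exists_rank_decomposition {v u : Word N} {b : Bool} (h : Repl v u b) :
    ∃ X Y Z : Multiset ℕ, Word.rank v = X + Z ∧ Word.rank u = X + Y ∧
      (∀ y ∈ Y, ∃ z ∈ Z, y < z) ∧ (b = true → Z ≠ 0) := by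
  induction h with
  | nil => exact ⟨0, 0, 0, rfl, rfl, by simp, by simp⟩
  | keep s _ ih =>
    obtain ⟨X, Y, Z, hv, hu, hYZ, hZ⟩ := ih
    refine ⟨s.size ::ₘ X, Y, Z, ?_, ?_, hYZ, hZ⟩ <;>
      simp only [Word.rank_cons, hv, hu, Multiset.cons_add]
  | split s l hl _ ih =>
    obtain ⟨X, Y, Z, hv, hu, hYZ, -⟩ := ih
    refine ⟨X, Word.rank l + Y, s.size ::ₘ Z, ?_, ?_, ?_, fun _ => Multiset.cons_ne_zero⟩
    · rw [Word.rank_cons, hv, Multiset.add_cons]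
    · rw [Word.rank_append, hu]
      abel
    · intro y hy
      rcases Multiset.mem_add.1 hy with hy | hy
      · obtain ⟨t, ht, rfl⟩ := List.mem_map.1 (Multiset.mem_coe.1 hy)
        exact ⟨s.size, Multiset.mem_cons_self _ _, (hl t ht).size_lt⟩
      · obtain ⟨z, hz, hyz⟩ := hYZ y hy
        exact ⟨z, Multiset.mem_cons_of_mem hz, hyz⟩

theorem Prec.rank_lt {u v : Word N} (h : Prec u v) :
    Multiset.IsDershowitzMannaLT (Word.rank u) (Word.rank v) := by
  obtain ⟨u', he, hr⟩ := h
  obtain ⟨X, Y, Z, hv, hu, hYZ, hZ⟩ := hr.exists_rank_decomposition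
  exact ⟨X, Y, Z, hZ rfl, he.rank_eq.trans hu, hv, hYZ⟩

end PS

open PS in
/-- The relation `≺` is transitive and well-founded. -/
theorem prec_transitive_wellFounded {N : ℕ} :
    Transitive (Prec (N := N)) ∧ WellFounded (Prec (N := N)) :=
  ⟨fun _ _ _ => Prec.trans,
    Subrelation.wf Prec.rank_lt (InvImage.wf Word.rank Multiset.wellFounded_isDershowitzMannaLT)⟩
end

section
/- If w·v is a reduced word and w·v ⪯ w·v′ (in the well-founded order generated by replacing a letter by a product of its proper subletters, together with commutation equivalence), then v ⪯ v′. -/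
/-!
Cancel the letters of `w` one at a time. Commutation never moves a letter past one it does not
commute with, so in any word equivalent to `s·z` the letter `s` reappears behind a prefix of
letters commuting with `s`. If the replacement keeps the leading `s` of `s·v'`, it cancels on
both sides. If it replaces `s` by the empty word, erasing that occurrence of `s` from the
replaced word is again a replacement. It cannot replace `s` by a nonempty product: its first
factor would be a proper subletter of `s`, which does not commute with `s`, standing in front
of `s`.
-/

namespace PS

variable {N : ℕ}

lemma not_comm_of_sub {t s : Letter N} (h : Sub t s) : ¬ Comm s t := by
  have := t.lo_le_hi
  have := s.lo_le_hi
  obtain ⟨h₁, h₂⟩ := h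
  rintro (h' | h') <;> omega

lemma not_comm_self (s : Letter N) : ¬ Comm s s := not_comm_of_sub ⟨le_rfl, le_rfl⟩

lemma SwapStep.head {c d : Letter N} (w : Word N) (h : Comm c d) :
    SwapStep (c :: d :: w) (d :: c :: w) :=
  ⟨[], w, c, d, h, rfl, rfl⟩

lemma SwapStep.cons {u u' : Word N} (c : Letter N) (h : SwapStep u u') :
    SwapStep (c :: u) (c :: u') := by
  obtain ⟨x, y, s, t, hst, rfl, rfl⟩ := h
  exact ⟨c :: x, y, s, t, hst, rfl, rfl⟩

lemma swapStep_cons_cases {c : Letter N} {u v : Word N} (h : SwapStep (c :: u) v) :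
    (∃ u', SwapStep u u' ∧ v = c :: u') ∨ ∃ d w, u = d :: w ∧ Comm c d ∧ v = d :: c :: w := by
  obtain ⟨x, y, s, t, hst, hu, rfl⟩ := h
  cases x with
  | nil =>
    obtain ⟨rfl, rfl⟩ := List.cons.inj hu
    exact Or.inr ⟨t, y, rfl, hst, rfl⟩
  | cons e x =>
    obtain ⟨rfl, rfl⟩ := List.cons.inj hu
    exact Or.inl ⟨x ++ t :: s :: y, ⟨x, y, s, t, hst, rfl, rfl⟩, rfl⟩

lemma WEquiv.single {u v : Word N} (h : SwapStep u v) : WEquiv u v :=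
  Relation.ReflTransGen.single h

lemma WEquiv.cons {u v : Word N} (c : Letter N) (h : WEquiv u v) : WEquiv (c :: u) (c :: v) :=
  Relation.ReflTransGen.lift (c :: ·) (fun _ _ => SwapStep.cons c) _ _ h

lemma SwapStep.exists_eq_append_cons {s : Letter N} {y u' : Word N} :
    ∀ {x : Word N}, SwapStep (x ++ s :: y) u' → (∀ r ∈ x, Comm s r) →
      ∃ x' y', u' = x' ++ s :: y' ∧ (∀ r ∈ x', Comm s r) ∧ WEquiv (x ++ y) (x' ++ y')
  | [], h, _ => by
    rcases swapStep_cons_cases h with ⟨y', hy, rfl⟩ | ⟨d, w, rfl, hsd, rfl⟩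
    · exact ⟨[], y', rfl, by simp, WEquiv.single hy⟩
    · exact ⟨[d], w, rfl, by simpa using hsd, Relation.ReflTransGen.refl⟩
  | c :: x, h, hx => by
    have hxc : ∀ r ∈ x, Comm s r := fun r hr => hx r (List.mem_cons_of_mem c hr)
    rcases swapStep_cons_cases h with ⟨u'', hu, rfl⟩ | ⟨d, w, hdw, hcd, rfl⟩
    · obtain ⟨x', y', rfl, hx', hxy⟩ := hu.exists_eq_append_cons hxc
      refine ⟨c :: x', y', rfl, ?_, hxy.cons c⟩
      simpa [hx c (by simp)] using hx'
    · cases x with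
      | nil =>
        obtain ⟨rfl, rfl⟩ := List.cons.inj hdw
        exact ⟨[], c :: y, rfl, by simp, Relation.ReflTransGen.refl⟩
      | cons e x =>
        obtain ⟨rfl, rfl⟩ := List.cons.inj hdw
        refine ⟨e :: c :: x, y, rfl, fun r hr => hx r ?_, WEquiv.single (SwapStep.head _ hcd)⟩
        simp only [List.mem_cons] at hr ⊢
        tauto

lemma WEquiv.exists_eq_append_cons {s : Letter N} {z u : Word N} (h : WEquiv (s :: z) u) :
    ∃ x y, u = x ++ s :: y ∧ (∀ r ∈ x, Comm s r) ∧ WEquiv z (x ++ y) := by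
  induction h with
  | refl => exact ⟨[], z, rfl, by simp, Relation.ReflTransGen.refl⟩
  | tail _ hstep ih =>
    obtain ⟨x, y, rfl, hx, hz⟩ := ih
    obtain ⟨x', y', rfl, hx', hxy⟩ := hstep.exists_eq_append_cons hx
    exact ⟨x', y', rfl, hx', Relation.ReflTransGen.trans hz hxy⟩

lemma WEquiv.cons_cons {s t : Letter N} {z z' : Word N} (h : WEquiv (s :: z) (t :: z'))
    (hst : ¬ Comm s t) : s = t ∧ WEquiv z z' := by
  obtain ⟨x, y, hxy, hx, hz⟩ := h.exists_eq_append_cons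
  cases x with
  | nil =>
    obtain ⟨rfl, rfl⟩ := List.cons.inj hxy
    exact ⟨rfl, hz⟩
  | cons r x =>
    obtain ⟨rfl, -⟩ := List.cons.inj hxy
    exact absurd (hx t (by simp)) hst

lemma WEquiv.cancel_append_left {z z' : Word N} :
    ∀ {w : Word N}, WEquiv (w ++ z) (w ++ z') → WEquiv z z'
  | [], h => h
  | s :: _, h => WEquiv.cancel_append_left (h.cons_cons (not_comm_self s)).2

lemma Repl.erase {m : Word N} {b : Bool} {s : Letter N} {y : Word N} :
    ∀ {x u : Word N}, Repl m u b → u = x ++ s :: y → Repl m (x ++ y) true := by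
  intro x u h
  induction h generalizing x with
  | nil => simp
  | keep r hr ih =>
    intro hu
    cases x with
    | nil =>
      obtain ⟨rfl, rfl⟩ := List.cons.inj hu
      simpa using Repl.split r [] (by simp) hr
    | cons c x =>
      obtain ⟨rfl, rfl⟩ := List.cons.inj hu
      exact Repl.keep r (ih rfl)
  | split r l hl hr ih =>
    intro hu
    rcases List.append_eq_append_iff.mp hu.symm with ⟨l', rfl, hl'⟩ | ⟨x', rfl, rfl⟩
    · cases l' with
      | nil =>
        simpa using Repl.split r x (by simpa using hl) (ih (x := []) (by simpa using hl'.symm))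
      | cons t l' =>
        obtain ⟨rfl, rfl⟩ := List.cons.inj hl'
        have hsub : ∀ t ∈ x ++ l', PSub t r := fun t ht => hl t (by simp only [List.mem_append, List.mem_cons] at ht ⊢; tauto)
        simpa using Repl.split r (x ++ l') hsub hr
    · simpa using Repl.split r l hl (ih rfl)

lemma Prec.cancel_cons {s : Letter N} {z z' : Word N} (h : Prec (s :: z) (s :: z')) :
    Prec z z' := by
  obtain ⟨u, hu, hr⟩ := h
  cases hr with
  | keep _ hr => exact ⟨_, (hu.cons_cons (not_comm_self s)).2, hr⟩
  | split _ l hl hr =>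
    cases l with
    | nil =>
      obtain ⟨x, y, hxy, -, hz⟩ := hu.exists_eq_append_cons
      exact ⟨x ++ y, hz, hr.erase hxy⟩
    | cons t l =>
      have hts := hl t (by simp)
      exact absurd (hu.cons_cons (not_comm_of_sub hts.1)).1.symm hts.2

lemma Prec.cancel_append_left {z z' : Word N} :
    ∀ {w : Word N}, Prec (w ++ z) (w ++ z') → Prec z z'
  | [], h => h
  | _ :: _, h => Prec.cancel_append_left h.cancel_cons

end PS

open PS in
theorem preceq_left_cancel_general {N : ℕ} (w v v' : Word N)
    (h : Preceq (w ++ v) (w ++ v')) :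
    Preceq v v' :=
  h.imp Prec.cancel_append_left WEquiv.cancel_append_left

open PS in
/-- If `w·v` is reduced and `w·v ⪯ w·v'`, then `v ⪯ v'`. -/
theorem preceq_left_cancel {N : ℕ} (w v v' : Word N)
    (hred : Reduced (w ++ v)) (h : Preceq (w ++ v) (w ++ v')) :
    Preceq v v' :=
  preceq_left_cancel_general w v v' h
end
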